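/- Define κ_m := C(2m, m) · √(π·m) · e^{1/(8m)} / 2^{2m} for integers m ≥ 1. Then the sequence (κ_m) is strictly decreasing in m and converges to 1 as m → ∞. -/

import Mathlib

/-!
Writing `u m = C(2m, m) / 4^m`, the recursion `2(m+1) u(m+1) = (2m+1) u m` turns `κ(m+1) < κ m`
into `(2m+1) √(m+1) e^{1/(8(m+1))} < 2(m+1) √m e^{1/(8m)}`. After squaring, with
`d = 1/(8m(m+1))`, this reads `4m(m+1)²(1 + 2d) < 4m(m+1)² e^{2d}`, i.e. `1 + 2d < e^{2d}`.
The limit follows from Stirling's formula: `u m √m = s(2m) / s(m)²` for the Stirling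
sequence `s`, which tends to `√π / π = 1 / √π`.
-/

open Real

/-- `κ_m := C(2m,m)·√(πm)·e^{1/(8m)}/2^{2m}`. -/
noncomputable def kappaSeq (m : ℕ) : ℝ :=
  ((2 * m).choose m : ℝ) * Real.sqrt (π * (m : ℝ)) * Real.exp (1 / (8 * (m : ℝ))) / 2 ^ (2 * m)

open Filter Topology Nat Stirling

lemma centralBinom_succ_div_four_pow (m : ℕ) :
    2 * (m + 1) * ((centralBinom (m + 1) : ℝ) / 4 ^ (m + 1)) =
      (2 * m + 1) * ((centralBinom m : ℝ) / 4 ^ m) := by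
  have h : ((m + 1) * centralBinom (m + 1) : ℝ) = 2 * (2 * m + 1) * centralBinom m := by
    exact_mod_cast succ_mul_centralBinom_succ m
  rw [pow_succ]
  field_simp
  linear_combination 2 * h

lemma centralBinom_mul_sqrt_div_four_pow_eq_stirlingSeq (m : ℕ) :
    (centralBinom m : ℝ) * √m / 4 ^ m = stirlingSeq (2 * m) / stirlingSeq m ^ 2 := by
  rcases eq_or_ne m 0 with rfl | hm
  · simp
  have hx : (0 : ℝ) < m := by positivity
  have hchoose : (centralBinom m : ℝ) = (2 * m)! / (m ! * m !) := by
    rw [centralBinom, cast_choose ℝ (by omega), show 2 * m - m = m by omega]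
  have hsqrt : √(2 * (2 * m : ℕ)) = 2 * √m := by
    rw [show (2 : ℝ) * (2 * m : ℕ) = 2 ^ 2 * m by push_cast; ring, sqrt_mul (by positivity),
      sqrt_sq zero_le_two]
  have hpow : ((2 * m : ℕ) / exp 1) ^ (2 * m) = 4 ^ m * ((m / exp 1) ^ m) ^ 2 := by
    rw [show ((2 * m : ℕ) : ℝ) / exp 1 = 2 * (m / exp 1) by push_cast; ring, mul_pow, pow_mul,
      pow_mul']
    norm_num
  rw [stirlingSeq, stirlingSeq, hsqrt, hpow, hchoose]
  field_simp
  rw [sq_sqrt hx.le, sq_sqrt (by positivity)]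
  ring

lemma tendsto_centralBinom_mul_sqrt_div_four_pow :
    Tendsto (fun m : ℕ ↦ (centralBinom m : ℝ) * √m / 4 ^ m) atTop (𝓝 (1 / √π)) := by
  simp only [centralBinom_mul_sqrt_div_four_pow_eq_stirlingSeq]
  have h2 : Tendsto (fun m : ℕ ↦ stirlingSeq (2 * m)) atTop (𝓝 √π) :=
    tendsto_stirlingSeq_sqrt_pi.comp (tendsto_id.const_mul_atTop' two_pos)
  have := h2.div (tendsto_stirlingSeq_sqrt_pi.pow 2) (by positivity)
  rwa [sq_sqrt pi_pos.le, sqrt_div_self'] at this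

lemma two_mul_add_one_mul_sqrt_mul_exp_lt {x : ℝ} (hx : 0 < x) :
    (2 * x + 1) * √(x + 1) * exp (1 / (8 * (x + 1))) <
      2 * (x + 1) * √x * exp (1 / (8 * x)) := by
  obtain ⟨d, hd_def⟩ : ∃ d : ℝ, d = 1 / (8 * x * (x + 1)) := ⟨_, rfl⟩
  have hd : 1 / (8 * x) = 1 / (8 * (x + 1)) + d := by
    rw [hd_def]; field_simp
  have hd_pos : 0 < d := by rw [hd_def]; positivity
  have hsq : ((2 * x + 1) * √(x + 1)) ^ 2 < (2 * (x + 1) * √x * exp d) ^ 2 := by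
    have h2d : 4 * x * (x + 1) ^ 2 * (2 * d) = x + 1 := by
      rw [hd_def]; field_simp; ring
    calc ((2 * x + 1) * √(x + 1)) ^ 2 = 4 * x * (x + 1) ^ 2 * (2 * d + 1) := by
          rw [mul_pow, sq_sqrt (by positivity)]; linear_combination -h2d
      _ < 4 * x * (x + 1) ^ 2 * exp (2 * d) := by gcongr; exact add_one_lt_exp (by positivity)
      _ = (2 * (x + 1) * √x * exp d) ^ 2 := by
          rw [mul_pow, mul_pow, sq_sqrt hx.le, ← exp_nat_mul]; push_cast; ring
  calc (2 * x + 1) * √(x + 1) * exp (1 / (8 * (x + 1)))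
      < 2 * (x + 1) * √x * exp d * exp (1 / (8 * (x + 1))) :=
        mul_lt_mul_of_pos_right (lt_of_pow_lt_pow_left₀ 2 (by positivity) hsq) (exp_pos _)
    _ = 2 * (x + 1) * √x * exp (1 / (8 * x)) := by rw [hd, exp_add]; ring

lemma kappaSeq_eq (m : ℕ) :
    kappaSeq m = (centralBinom m : ℝ) / 4 ^ m * √(π * m) * exp (1 / (8 * m)) := by
  rw [kappaSeq, pow_mul, centralBinom]
  ring

lemma kappaSeq_pos {m : ℕ} (hm : m ≠ 0) : 0 < kappaSeq m := by
  have hc := centralBinom_pos m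
  have hx : (0 : ℝ) < m := by positivity
  rw [kappaSeq_eq]
  positivity

lemma kappaSeq_succ_mul (m : ℕ) :
    2 * (m + 1) * √m * exp (1 / (8 * m)) * kappaSeq (m + 1) =
      (2 * m + 1) * √(m + 1) * exp (1 / (8 * (m + 1))) * kappaSeq m := by
  have hu := centralBinom_succ_div_four_pow m
  simp only [kappaSeq_eq, sqrt_mul pi_pos.le]
  push_cast
  linear_combination √π * √m * √(m + 1) * exp (1 / (8 * m)) * exp (1 / (8 * (m + 1))) * hu

lemma kappaSeq_succ_lt {m : ℕ} (hm : m ≠ 0) : kappaSeq (m + 1) < kappaSeq m := by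
  have hx : (0 : ℝ) < m := by positivity
  have hκ := kappaSeq_pos hm
  have hA : (0 : ℝ) ≤ 2 * (m + 1) * √m * exp (1 / (8 * m)) := by positivity
  refine lt_of_mul_lt_mul_left ?_ hA
  rw [kappaSeq_succ_mul]
  exact mul_lt_mul_of_pos_right (two_mul_add_one_mul_sqrt_mul_exp_lt hx) hκ

/-- The sequence `κ_m` is strictly decreasing in `m ≥ 1` and converges to `1`. -/
theorem kappa_strictAnti_tendsto_one :
    StrictAntiOn kappaSeq (Set.Ici 1) ∧
    Filter.Tendsto kappaSeq Filter.atTop (nhds 1) := by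
  constructor
  · refine strictAntiOn_Ici_of_lt_pred fun m hm ↦ ?_
    obtain ⟨k, rfl⟩ : ∃ k, m = k + 1 := exists_eq_add_one.mpr (by omega)
    simpa using kappaSeq_succ_lt (m := k) (by omega)
  · have hexp : Tendsto (fun m : ℕ ↦ exp (1 / (8 * m))) atTop (𝓝 1) := by
      have h : Tendsto (fun m : ℕ ↦ 1 / (8 * (m : ℝ))) atTop (𝓝 0) :=
        (tendsto_natCast_atTop_atTop.const_mul_atTop' (by norm_num : (0 : ℝ) < 8)
          |>.inv_tendsto_atTop).congr fun _ ↦ (one_div _).symm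
      have := (continuous_exp.tendsto 0).comp h
      rwa [exp_zero] at this
    have hκ : kappaSeq =
        fun m : ℕ ↦ (centralBinom m : ℝ) * √m / 4 ^ m * √π * exp (1 / (8 * m)) := by
      ext m
      rw [kappaSeq_eq, sqrt_mul pi_pos.le]
      ring
    have := (tendsto_centralBinom_mul_sqrt_div_four_pow.mul_const √π).mul hexp
    rwa [one_div_mul_cancel (by positivity), one_mul, ← hκ] at this
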